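/- arXiv:1509.07462 — 2 statements merged into one kernel-verified Lean document; each statement's English description precedes it below -/
import Mathlib

section
/- Let H be a reduced commutative cancellative monoid contained as a submonoid in a free abelian monoid F = F(P) such that the embedding H ↪ F is a cofinal divisor homomorphism; let G = q(F)/q(H) be the class group and G₀ = { [p] : p ∈ P } ⊆ G the set of classes containing prime divisors. Then the map β : H → B(G₀) sending p₁⋯p_ℓ ∈ H to the zero-sum sequence [p₁]⋯[p_ℓ] over G₀ is a transfer homomorphism; in particular L(H) = L(B(G₀)), i.e., the systems of sets of lengths of H and B(G₀) coincide. -/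
open scoped Classical ENNReal

/-- An atom of the (reduced) submonoid `S`: a nonzero element of `S` which is not the
sum of two nonzero elements of `S`. -/
def IsAtomIn {N : Type*} [AddCommMonoid N] (S : Set N) (u : N) : Prop :=
  u ∈ S ∧ u ≠ 0 ∧ ∀ v ∈ S, ∀ w ∈ S, u = v + w → v = 0 ∨ w = 0

/-- The set of lengths of `a` relative to the submonoid `S`. -/
def lengthsIn {N : Type*} [AddCommMonoid N] (S : Set N) (a : N) : Set ℕ :=
  {k | ∃ l : List N, l.length = k ∧ (∀ x ∈ l, IsAtomIn S x) ∧ l.sum = a}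

/-- The canonical embedding of the free abelian monoid `F(P)` (multisets over `P`)
into its quotient group `q(F(P)) = P →₀ ℤ`. -/
noncomputable def iota {P : Type*} [DecidableEq P] (s : Multiset P) : P →₀ ℤ :=
  Finsupp.mapRange (fun n : ℕ => (n : ℤ)) (by simp) (Multiset.toFinsupp s)

/-- The quotient group `q(H)` of `H` inside `q(F(P))`. -/
noncomputable def qGroup {P : Type*} [DecidableEq P] (H : Set (Multiset P)) : AddSubgroup (P →₀ ℤ) :=
  AddSubgroup.closure (iota '' H)

/-- The class group `G = q(F)/q(H)`. -/
abbrev ClsGrp {P : Type*} [DecidableEq P] (H : Set (Multiset P)) :=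
  (P →₀ ℤ) ⧸ qGroup H

/-- The class `[p] ∈ G` of a prime divisor `p ∈ P`. -/
noncomputable def clsOf {P : Type*} [DecidableEq P] (H : Set (Multiset P)) (p : P) :
    ClsGrp H :=
  QuotientAddGroup.mk (iota ({p} : Multiset P))

/-- `G₀ ⊆ G`: the set of classes containing prime divisors. -/
def primeClasses {P : Type*} [DecidableEq P] (H : Set (Multiset P)) : Set (ClsGrp H) :=
  Set.range (clsOf H)

/-- The map `β` sending `p₁ ⋯ p_ℓ` to the sequence `[p₁] ⋯ [p_ℓ]` over `G₀`. -/
noncomputable def betaMap {P : Type*} [DecidableEq P] (H : Set (Multiset P))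
    (s : Multiset P) : Multiset (ClsGrp H) :=
  s.map (clsOf H)

/-- The monoid of zero-sum sequences over `G₀`, as a set of multisets over `G`. -/
def BG0 {P : Type*} [DecidableEq P] (H : Set (Multiset P)) : Set (Multiset (ClsGrp H)) :=
  {t | (∀ g ∈ t, g ∈ primeClasses H) ∧ t.sum = 0}

/-!
`H` is saturated in `F(P)`: a multiset `f` lies in `H` exactly when its image in `q(F)` lies in
`q(H)`, i.e. when `[f] = 0` in the class group. Since `[f]` is the sum of the classes of the primes
dividing `f`, this says `f ∈ H ↔ β(f) ∈ B(G₀)`, and any splitting of `β(a)` into two sequences is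
realised by a splitting of the multiset `a` itself, whose parts then lie in `H`. Transfer
homomorphisms match atoms with atoms, hence factorizations of `a` with factorizations of `β(a)` of
the same length.
-/

theorem Multiset.exists_map_eq_of_forall_mem_range {α β : Type*} (f : α → β) {t : Multiset β}
    (ht : ∀ y ∈ t, y ∈ Set.range f) : ∃ s : Multiset α, s.map f = t := by
  induction t using Multiset.induction with
  | empty => exact ⟨0, rfl⟩
  | cons y t ih =>
    obtain ⟨x, rfl⟩ := ht y (Multiset.mem_cons_self _ _)
    obtain ⟨s, hs⟩ := ih fun y hy => ht y (Multiset.mem_cons_of_mem hy)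
    exact ⟨x ::ₘ s, by rw [Multiset.map_cons, hs]⟩

theorem Multiset.exists_eq_add_of_map_eq_add {α β : Type*} (f : α → β) (s t : Multiset β) :
    ∀ {a : Multiset α}, a.map f = s + t → ∃ b c, a = b + c ∧ b.map f = s ∧ c.map f = t := by
  induction s using Multiset.induction with
  | empty => exact fun {a} h => ⟨0, a, by simp, rfl, by simpa using h⟩
  | cons y s ih =>
    intro a h
    rw [Multiset.cons_add, ← Multiset.map_eq_cons] at h
    obtain ⟨x, hx, rfl, h⟩ := h
    obtain ⟨b, c, hbc, rfl, rfl⟩ := ih h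
    exact ⟨x ::ₘ b, c, by rw [Multiset.cons_add, ← hbc, Multiset.cons_erase hx], by simp, rfl⟩

section TransferHom

variable {M N : Type*} [AddCommMonoid M] [AddCommMonoid N]

structure IsTransferHom (S : AddSubmonoid M) (T : AddSubmonoid N) (θ : M →+ N) : Prop where
  mapsTo : Set.MapsTo θ S T
  surjOn : Set.SurjOn θ S T
  eq_zero_of_map_eq_zero : ∀ a ∈ S, θ a = 0 → a = 0
  exists_add_of_map_eq_add : ∀ a ∈ S, ∀ s ∈ T, ∀ t ∈ T, θ a = s + t →
    ∃ b ∈ S, ∃ c ∈ S, a = b + c ∧ θ b = s ∧ θ c = t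

namespace IsTransferHom

variable {S : AddSubmonoid M} {T : AddSubmonoid N} {θ : M →+ N}

theorem isAtomIn_map_iff (hθ : IsTransferHom S T θ) {u : M} (hu : u ∈ S) :
    IsAtomIn (T : Set N) (θ u) ↔ IsAtomIn (S : Set M) u := by
  constructor
  · rintro ⟨-, hθu, hsplit⟩
    refine ⟨hu, fun h => hθu (by rw [h, map_zero]), fun v hv w hw h => ?_⟩
    refine (hsplit (θ v) (hθ.mapsTo hv) (θ w) (hθ.mapsTo hw) (by rw [h, map_add])).imp ?_ ?_
    · exact hθ.eq_zero_of_map_eq_zero v hv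
    · exact hθ.eq_zero_of_map_eq_zero w hw
  · rintro ⟨-, hu0, hsplit⟩
    refine ⟨hθ.mapsTo hu, fun h => hu0 (hθ.eq_zero_of_map_eq_zero u hu h), fun s hs t ht h => ?_⟩
    obtain ⟨b, hb, c, hc, rfl, rfl, rfl⟩ := hθ.exists_add_of_map_eq_add _ hu s hs t ht h
    exact (hsplit b hb c hc rfl).imp (by rintro rfl; exact map_zero θ) (by rintro rfl; exact map_zero θ)

theorem exists_factorization_of_map (hθ : IsTransferHom S T θ) (m : List N) :
    ∀ {a : M}, a ∈ S → (∀ x ∈ m, IsAtomIn (T : Set N) x) → m.sum = θ a →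
      ∃ l : List M, l.length = m.length ∧ (∀ x ∈ l, IsAtomIn (S : Set M) x) ∧ l.sum = a := by
  induction m with
  | nil =>
    intro a ha _ h
    exact ⟨[], rfl, by simp, (hθ.eq_zero_of_map_eq_zero a ha h.symm).symm⟩
  | cons B m ih =>
    intro a ha hatoms h
    have hB : B ∈ T := (hatoms B List.mem_cons_self).1
    have hm : m.sum ∈ T := list_sum_mem fun x hx => (hatoms x (List.mem_cons_of_mem _ hx)).1
    obtain ⟨b, hb, c, hc, rfl, rfl, hcm⟩ :=
      hθ.exists_add_of_map_eq_add a ha _ hB _ hm (by rw [← h, List.sum_cons])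
    obtain ⟨l, hlen, hl, rfl⟩ := ih hc (fun x hx => hatoms x (List.mem_cons_of_mem _ hx)) hcm.symm
    refine ⟨b :: l, by simp [hlen], ?_, List.sum_cons⟩
    rintro x (_ | ⟨_, hx⟩)
    · exact (hθ.isAtomIn_map_iff hb).1 (hatoms _ List.mem_cons_self)
    · exact hl x hx

theorem lengthsIn_map (hθ : IsTransferHom S T θ) {a : M} (ha : a ∈ S) :
    lengthsIn (T : Set N) (θ a) = lengthsIn (S : Set M) a := by
  ext k
  constructor
  · rintro ⟨m, rfl, hatoms, hsum⟩
    exact hθ.exists_factorization_of_map m ha hatoms hsum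
  · rintro ⟨l, rfl, hatoms, rfl⟩
    refine ⟨l.map θ, List.length_map _, ?_, (map_list_sum θ l).symm⟩
    simp only [List.mem_map]
    rintro _ ⟨u, hu, rfl⟩
    exact (hθ.isAtomIn_map_iff (hatoms u hu).1).2 (hatoms u hu)

theorem setOf_lengthsIn_eq (hθ : IsTransferHom S T θ) :
    {L : Set ℕ | ∃ a ∈ S, L = lengthsIn (S : Set M) a} =
      {L : Set ℕ | ∃ t ∈ T, L = lengthsIn (T : Set N) t} := by
  ext L
  constructor
  · rintro ⟨a, ha, rfl⟩
    exact ⟨θ a, hθ.mapsTo ha, (hθ.lengthsIn_map ha).symm⟩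
  · rintro ⟨t, ht, rfl⟩
    obtain ⟨a, ha, rfl⟩ := hθ.surjOn ht
    exact ⟨a, ha, hθ.lengthsIn_map ha⟩

end IsTransferHom

end TransferHom

def zeroSumSeq {G : Type*} [AddCommGroup G] (G₀ : Set G) : AddSubmonoid (Multiset G) where
  carrier := {t | (∀ g ∈ t, g ∈ G₀) ∧ t.sum = 0}
  add_mem' := by
    rintro s t ⟨hs, hs0⟩ ⟨ht, ht0⟩
    refine ⟨fun g hg => (Multiset.mem_add.1 hg).elim (hs g) (ht g), ?_⟩
    rw [Multiset.sum_add, hs0, ht0, add_zero]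
  zero_mem' := ⟨fun _ h => absurd h (Multiset.notMem_zero _), Multiset.sum_zero⟩

section ClassGroup

variable {P : Type*} [DecidableEq P]

theorem iota_apply (s : Multiset P) (p : P) : iota s p = s.count p := by
  simp [iota]

theorem iota_zero : iota (0 : Multiset P) = 0 := by
  ext p; simp [iota_apply]

theorem iota_add (s t : Multiset P) : iota (s + t) = iota s + iota t := by
  ext p; simp [iota_apply]

theorem iota_injective : Function.Injective (iota (P := P)) := fun s t h =>
  Multiset.ext.2 fun p => by exact_mod_cast (iota_apply s p).symm.trans (h ▸ iota_apply t p)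

theorem exists_sub_eq_of_mem_qGroup (H : AddSubmonoid (Multiset P)) {x : P →₀ ℤ}
    (hx : x ∈ qGroup (H : Set (Multiset P))) : ∃ a ∈ H, ∃ b ∈ H, iota a - iota b = x := by
  induction hx using AddSubgroup.closure_induction with
  | mem x hx =>
    obtain ⟨a, ha, rfl⟩ := hx
    exact ⟨a, ha, 0, H.zero_mem, by rw [iota_zero, sub_zero]⟩
  | zero => exact ⟨0, H.zero_mem, 0, H.zero_mem, sub_self _⟩
  | add x y _ _ hx hy =>
    obtain ⟨a, ha, b, hb, rfl⟩ := hx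
    obtain ⟨c, hc, d, hd, rfl⟩ := hy
    exact ⟨a + c, H.add_mem ha hc, b + d, H.add_mem hb hd, by rw [iota_add, iota_add]; abel⟩
  | neg x _ hx =>
    obtain ⟨a, ha, b, hb, rfl⟩ := hx
    exact ⟨b, hb, a, ha, (neg_sub _ _).symm⟩

theorem mem_iff_iota_mem_qGroup (H : AddSubmonoid (Multiset P))
    (hdiv : ∀ a ∈ H, ∀ b ∈ H, a ≤ b → b - a ∈ H) (f : Multiset P) :
    f ∈ H ↔ iota f ∈ qGroup (H : Set (Multiset P)) := by
  refine ⟨fun hf => AddSubgroup.subset_closure ⟨f, hf, rfl⟩, fun hf => ?_⟩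
  obtain ⟨a, ha, b, hb, hab⟩ := exists_sub_eq_of_mem_qGroup H hf
  have hfb : f + b = a := iota_injective (by rw [iota_add, ← hab, sub_add_cancel])
  simpa [← hfb] using hdiv b hb a ha (hfb ▸ Multiset.le_add_left b f)

theorem sum_betaMap (H : Set (Multiset P)) (s : Multiset P) :
    (betaMap H s).sum = QuotientAddGroup.mk (iota s) := by
  induction s using Multiset.induction with
  | empty => simp [betaMap, iota_zero]
  | cons p s ih =>
    rw [betaMap, Multiset.map_cons, Multiset.sum_cons, ← betaMap, ih, ← Multiset.singleton_add,
      iota_add]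
    rfl

theorem betaMap_mem_BG0_iff (H : AddSubmonoid (Multiset P))
    (hdiv : ∀ a ∈ H, ∀ b ∈ H, a ≤ b → b - a ∈ H) (f : Multiset P) :
    betaMap (H : Set (Multiset P)) f ∈ BG0 (H : Set (Multiset P)) ↔ f ∈ H := by
  rw [mem_iff_iota_mem_qGroup H hdiv, ← QuotientAddGroup.eq_zero_iff, ← sum_betaMap]
  refine and_iff_right fun g hg => ?_
  obtain ⟨p, -, rfl⟩ := Multiset.mem_map.1 hg
  exact ⟨p, rfl⟩

noncomputable def betaHom (H : Set (Multiset P)) : Multiset P →+ Multiset (ClsGrp H) :=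
  Multiset.mapAddMonoidHom (clsOf H)

theorem isTransferHom_betaHom (H : AddSubmonoid (Multiset P))
    (hdiv : ∀ a ∈ H, ∀ b ∈ H, a ≤ b → b - a ∈ H) :
    IsTransferHom H (zeroSumSeq (primeClasses (H : Set (Multiset P))))
      (betaHom (H : Set (Multiset P))) where
  mapsTo _ ha := (betaMap_mem_BG0_iff H hdiv _).2 ha
  surjOn t ht := by
    obtain ⟨a, rfl⟩ := Multiset.exists_map_eq_of_forall_mem_range _ ht.1
    exact ⟨a, (betaMap_mem_BG0_iff H hdiv a).1 ht, rfl⟩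
  eq_zero_of_map_eq_zero _ _ h := Multiset.map_eq_zero.1 h
  exists_add_of_map_eq_add a _ s hs t ht h := by
    obtain ⟨b, c, rfl, rfl, rfl⟩ := Multiset.exists_eq_add_of_map_eq_add _ s t h
    exact ⟨b, (betaMap_mem_BG0_iff H hdiv b).1 hs, c, (betaMap_mem_BG0_iff H hdiv c).1 ht,
      rfl, rfl, rfl⟩

end ClassGroup

theorem stmt16_general {P : Type*} [DecidableEq P] (H : Set (Multiset P))
    (h0 : 0 ∈ H) (hadd : ∀ a ∈ H, ∀ b ∈ H, a + b ∈ H)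
    (hdiv : ∀ a ∈ H, ∀ b ∈ H, a ≤ b → b - a ∈ H) :
    (∀ a ∈ H, betaMap H a ∈ BG0 H) ∧
    (∀ a b : Multiset P, betaMap H (a + b) = betaMap H a + betaMap H b) ∧
    (∀ t ∈ BG0 H, ∃ a ∈ H, betaMap H a = t) ∧
    (∀ a ∈ H, betaMap H a = 0 → a = 0) ∧
    (∀ a ∈ H, ∀ s t : Multiset (ClsGrp H), s ∈ BG0 H → t ∈ BG0 H →
      betaMap H a = s + t →
      ∃ b ∈ H, ∃ c ∈ H, a = b + c ∧ betaMap H b = s ∧ betaMap H c = t) ∧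
    {L : Set ℕ | ∃ a ∈ H, L = lengthsIn H a} =
      {L : Set ℕ | ∃ t ∈ BG0 H, L = lengthsIn (BG0 H) t} := by
  let S : AddSubmonoid (Multiset P) :=
    { carrier := H, add_mem' := fun ha hb => hadd _ ha _ hb, zero_mem' := h0 }
  have hβ : IsTransferHom S (zeroSumSeq (primeClasses H)) (betaHom H) :=
    isTransferHom_betaHom S hdiv
  exact ⟨fun a ha => hβ.mapsTo ha, map_add (betaHom H), fun t ht => hβ.surjOn ht,
    hβ.eq_zero_of_map_eq_zero, fun a ha s t hs ht => hβ.exists_add_of_map_eq_add a ha s hs t ht,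
    hβ.setOf_lengthsIn_eq⟩

theorem stmt16 {P : Type*} [DecidableEq P] (H : Set (Multiset P))
    (h0 : 0 ∈ H) (hadd : ∀ a ∈ H, ∀ b ∈ H, a + b ∈ H)
    (hdiv : ∀ a ∈ H, ∀ b ∈ H, a ≤ b → b - a ∈ H)
    (hcof : ∀ f : Multiset P, ∃ a ∈ H, f ≤ a) :
    (∀ a ∈ H, betaMap H a ∈ BG0 H) ∧
    (∀ a b : Multiset P, betaMap H (a + b) = betaMap H a + betaMap H b) ∧
    (∀ t ∈ BG0 H, ∃ a ∈ H, betaMap H a = t) ∧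
    (∀ a ∈ H, betaMap H a = 0 → a = 0) ∧
    (∀ a ∈ H, ∀ s t : Multiset (ClsGrp H), s ∈ BG0 H → t ∈ BG0 H →
      betaMap H a = s + t →
      ∃ b ∈ H, ∃ c ∈ H, a = b + c ∧ betaMap H b = s ∧ betaMap H c = t) ∧
    {L : Set ℕ | ∃ a ∈ H, L = lengthsIn H a} =
      {L : Set ℕ | ∃ t ∈ BG0 H, L = lengthsIn (BG0 H) t} :=
  stmt16_general H h0 hadd hdiv
end

section
/- Let G be a finite abelian group with |G| ≥ 3. Then for every k ∈ ℕ the union of sets of lengths U_k(G) of the monoid B(G) is an interval of integers; moreover ρ(B(G)) = D(G)/2, ρ_{2k}(B(G)) = k·D(G) for every k ∈ ℕ, and 1 + k·D(G) ≤ ρ_{2k+1}(B(G)) ≤ k·D(G) + ⌊D(G)/2⌋ for every k ∈ ℕ. -/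
open scoped Classical ENNReal

/-- An atom of a reduced additive monoid: a nonzero element which is not the sum of
two nonzero elements. -/
def IsAddAtom {N : Type*} [AddMonoid N] (u : N) : Prop :=
  u ≠ 0 ∧ ∀ v w : N, u = v + w → v = 0 ∨ w = 0

/-- The set of lengths of `a` in a reduced additive monoid. -/
def addLengths {N : Type*} [AddMonoid N] (a : N) : Set ℕ :=
  {k | ∃ l : List N, l.length = k ∧ (∀ x ∈ l, IsAddAtom x) ∧ l.sum = a}

/-- The set of distances of a set `L ⊆ ℕ`. -/
def distances (L : Set ℕ) : Set ℕ :=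
  {d | 0 < d ∧ ∃ k ∈ L, k + d ∈ L ∧ ∀ m ∈ L, k ≤ m → m ≤ k + d → m = k ∨ m = k + d}

/-- The set of distances of the submonoid `S`. -/
def DeltaIn {N : Type*} [AddCommMonoid N] (S : Set N) : Set ℕ :=
  ⋃ a ∈ S, distances (lengthsIn S a)

/-- The monoid of zero-sum sequences over `G`, realized as the set of multisets
over `G` with sum zero. -/
def ZS (G : Type*) [AddCommGroup G] : Set (Multiset G) := {s | s.sum = 0}

/-- The Davenport constant: the maximal length of an atom of `B(G)`. -/
noncomputable def davenport (G : Type*) [AddCommGroup G] : ℕ :=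
  sSup {n : ℕ | ∃ s : Multiset G, IsAtomIn (ZS G) s ∧ Multiset.card s = n}

/-- The union `U_k` of sets of lengths relative to `S`. -/
def UIn {N : Type*} [AddCommMonoid N] (S : Set N) (k : ℕ) : Set ℕ :=
  {ℓ | ∃ l1 l2 : List N, l1.length = k ∧ l2.length = ℓ ∧
      (∀ x ∈ l1, IsAtomIn S x) ∧ (∀ x ∈ l2, IsAtomIn S x) ∧ l1.sum = l2.sum}

/-- `ρ_k = sup U_k`, valued in `ℝ≥0∞`. -/
noncomputable def rhoKIn {N : Type*} [AddCommMonoid N] (S : Set N) (k : ℕ) : ℝ≥0∞ :=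
  ⨆ ℓ ∈ UIn S k, (ℓ : ℝ≥0∞)

/-- The elasticity `ρ(L) = sup L / min L` of a set of lengths, with `ρ({0}) = 1`. -/
noncomputable def setElasticity (L : Set ℕ) : ℝ≥0∞ :=
  if L = {0} then 1 else (⨆ n ∈ L, (n : ℝ≥0∞)) / ((sInf L : ℕ) : ℝ≥0∞)

/-- The elasticity of the submonoid `S`. -/
noncomputable def elasticityIn {N : Type*} [AddCommMonoid N] (S : Set N) : ℝ≥0∞ :=
  ⨆ a ∈ S, setElasticity (lengthsIn S a)

/-!
Weight a zero-sum sequence by its length plus its number of zeros. The atom `0` has weight `2`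
and every other atom has weight equal to its length, which lies between `2` and `D(G)`; so
two factorizations of one sequence, of lengths `k` and `ℓ`, satisfy `2ℓ ≤ k D(G)`. For an atom
`U` of length `D(G)`, the sequence `U (-U)` has the factorizations `U · (-U)` and
`∏_{g ∈ U} g (-g)`, of lengths `2` and `D(G)`, which realise the bounds.

For the interval property, suppose a factorization is shorter than another one of the same
sequence. Then some atom `A` of the shorter one meets two atoms `B₁, B₂` of the longer one,
in `g ∈ B₁` and `h ∈ B₂`. Replacing `g, h` by `g + h` in `A` and in `B₁ B₂` (and refactoring
the latter) gives two factorizations of a shorter sequence: the first has the same length,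
the second has lost at most one atom. Induction on the length of the sequence, and padding
with copies of the atom `0`, fill in every intermediate length.
-/

section Factorizations

variable {N : Type*} [AddCommMonoid N]

def factorizations (S : Set N) (a : N) : Set (Multiset N) :=
  {F | (∀ x ∈ F, IsAtomIn S x) ∧ F.sum = a}

variable {S : Set N}

theorem mem_lengthsIn_iff {a : N} {k : ℕ} :
    k ∈ lengthsIn S a ↔ ∃ F ∈ factorizations S a, Multiset.card F = k := by
  constructor
  · rintro ⟨l, rfl, hl, rfl⟩
    exact ⟨l, ⟨hl, Multiset.sum_coe l⟩, Multiset.coe_card l⟩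
  · rintro ⟨F, ⟨hF, rfl⟩, rfl⟩
    exact ⟨F.toList, Multiset.length_toList F, fun x hx => hF x (Multiset.mem_toList.mp hx),
      Multiset.sum_toList F⟩

theorem mem_UIn_iff {k ℓ : ℕ} : ℓ ∈ UIn S k ↔ ∃ a, k ∈ lengthsIn S a ∧ ℓ ∈ lengthsIn S a := by
  constructor
  · rintro ⟨l₁, l₂, rfl, rfl, h₁, h₂, hsum⟩
    exact ⟨l₁.sum, ⟨l₁, rfl, h₁, rfl⟩, ⟨l₂, rfl, h₂, hsum.symm⟩⟩
  · rintro ⟨a, ⟨l₁, rfl, h₁, rfl⟩, ⟨l₂, rfl, h₂, hsum⟩⟩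
    exact ⟨l₁, l₂, rfl, rfl, h₁, h₂, hsum.symm⟩

theorem UIn_comm {k ℓ : ℕ} : ℓ ∈ UIn S k ↔ k ∈ UIn S ℓ := by
  simp only [mem_UIn_iff, and_comm]

theorem add_mem_factorizations {a b : N} {F F' : Multiset N} (hF : F ∈ factorizations S a)
    (hF' : F' ∈ factorizations S b) : F + F' ∈ factorizations S (a + b) :=
  ⟨fun x hx => (Multiset.mem_add.mp hx).elim (hF.1 x) (hF'.1 x), by
    rw [Multiset.sum_add, hF.2, hF'.2]⟩

theorem add_mem_lengthsIn_add {a b : N} {k m : ℕ} (hk : k ∈ lengthsIn S a)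
    (hm : m ∈ lengthsIn S b) : k + m ∈ lengthsIn S (a + b) := by
  obtain ⟨F, hF, rfl⟩ := mem_lengthsIn_iff.mp hk
  obtain ⟨F', hF', rfl⟩ := mem_lengthsIn_iff.mp hm
  exact mem_lengthsIn_iff.mpr ⟨F + F', add_mem_factorizations hF hF', Multiset.card_add F F'⟩

theorem add_mem_UIn_add {k m ℓ n : ℕ} (hℓ : ℓ ∈ UIn S k) (hn : n ∈ UIn S m) :
    ℓ + n ∈ UIn S (k + m) := by
  obtain ⟨a, hk, hℓ⟩ := mem_UIn_iff.mp hℓ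
  obtain ⟨b, hm, hn⟩ := mem_UIn_iff.mp hn
  exact mem_UIn_iff.mpr ⟨a + b, add_mem_lengthsIn_add hk hm, add_mem_lengthsIn_add hℓ hn⟩

theorem self_mem_UIn {u : N} (hu : IsAtomIn S u) (k : ℕ) : k ∈ UIn S k :=
  have hk : k ∈ lengthsIn S (k • u) :=
    ⟨List.replicate k u, List.length_replicate, fun _ hx => List.eq_of_mem_replicate hx ▸ hu,
      List.sum_replicate k u⟩
  mem_UIn_iff.mpr ⟨k • u, hk, hk⟩

theorem le_rhoKIn {k ℓ : ℕ} (h : ℓ ∈ UIn S k) : (ℓ : ℝ≥0∞) ≤ rhoKIn S k :=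
  le_iSup₂ (f := fun ℓ (_ : ℓ ∈ UIn S k) => (ℓ : ℝ≥0∞)) ℓ h

theorem rhoKIn_le {k m : ℕ} (h : ∀ ℓ ∈ UIn S k, ℓ ≤ m) : rhoKIn S k ≤ m :=
  iSup₂_le fun ℓ hℓ => Nat.cast_le.mpr (h ℓ hℓ)

theorem factorizations_nonempty {α : Type*} {S : Set (Multiset α)} {s : Multiset α}
    (hs : s ∈ S) : (factorizations S s).Nonempty := by
  induction s using Multiset.strongInductionOn with
  | ih s ih =>
  rcases eq_or_ne s 0 with rfl | hne
  · exact ⟨0, by simp, Multiset.sum_zero⟩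
  by_cases hat : IsAtomIn S s
  · exact ⟨{s}, by simpa using hat, Multiset.sum_singleton s⟩
  obtain ⟨v, hv, w, hw, rfl, hv0, hw0⟩ : ∃ v ∈ S, ∃ w ∈ S, s = v + w ∧ v ≠ 0 ∧ w ≠ 0 := by
    by_contra! h
    exact hat ⟨hs, hne, fun v hv w hw hvw => or_iff_not_imp_left.mpr (h v hv w hw hvw)⟩
  obtain ⟨F, hF⟩ := ih v (lt_add_of_pos_right v (pos_iff_ne_zero.mpr hw0)) hv
  obtain ⟨F', hF'⟩ := ih w (lt_add_of_pos_left w (pos_iff_ne_zero.mpr hv0)) hw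
  exact ⟨F + F', add_mem_factorizations hF hF'⟩

end Factorizations

section ZeroSumAtoms

variable {G : Type*} [AddCommGroup G]

theorem IsAtomIn.eq_zero_or_eq_of_le {s t : Multiset G} (hs : IsAtomIn (ZS G) s) (ht : t ≤ s)
    (h0 : t.sum = 0) : t = 0 ∨ t = s := by
  obtain ⟨u, rfl⟩ := Multiset.le_iff_exists_add.mp ht
  have hu : u.sum = 0 := by
    have : (t + u).sum = 0 := hs.1
    rwa [Multiset.sum_add, h0, zero_add] at this
  exact (hs.2.2 t h0 u hu rfl).imp id fun h => by rw [h, add_zero]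

theorem IsAtomIn.eq_singleton_zero_of_zero_mem {s : Multiset G} (hs : IsAtomIn (ZS G) s)
    (h0 : (0 : G) ∈ s) : s = {0} :=
  ((hs.eq_zero_or_eq_of_le (Multiset.singleton_le.mpr h0) (Multiset.sum_singleton 0)).resolve_left
    (Multiset.singleton_ne_zero 0)).symm

theorem isAtomIn_singleton_zero : IsAtomIn (ZS G) {0} := by
  refine ⟨Multiset.sum_singleton 0, Multiset.singleton_ne_zero 0, fun v _ w _ h => ?_⟩
  have : Multiset.card v + Multiset.card w = 1 := by
    rw [← Multiset.card_add, ← h, Multiset.card_singleton]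
  rcases Nat.add_eq_one_iff.mp this with ⟨hv, -⟩ | ⟨-, hw⟩
  exacts [Or.inl (Multiset.card_eq_zero.mp hv), Or.inr (Multiset.card_eq_zero.mp hw)]

theorem isAtomIn_pair {g : G} (hg : g ≠ 0) : IsAtomIn (ZS G) {g, -g} := by
  refine ⟨by simp [ZS], by simp, fun v hv w _ h => ?_⟩
  by_contra! hvw
  have hcard : Multiset.card v + Multiset.card w = 2 := by
    rw [← Multiset.card_add, ← h]; rfl
  have hv1 : Multiset.card v = 1 := by
    have := Multiset.card_pos.mpr hvw.1
    have := Multiset.card_pos.mpr hvw.2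
    omega
  obtain ⟨x, rfl⟩ := Multiset.card_eq_one.mp hv1
  have hx : x = 0 := by simpa [ZS] using hv
  have : x ∈ ({g, -g} : Multiset G) := by simp [h]
  simp [hx, eq_comm, hg] at this

theorem IsAtomIn.map_neg {s : Multiset G} (hs : IsAtomIn (ZS G) s) :
    IsAtomIn (ZS G) (s.map Neg.neg) := by
  have hneg : ∀ t ∈ ZS G, t.map Neg.neg ∈ ZS G := fun t (ht : t.sum = 0) => by
    show (t.map Neg.neg).sum = 0
    rw [Multiset.sum_map_neg', ht, neg_zero]
  refine ⟨hneg s hs.1, by simpa using hs.2.1, fun v hv w hw h => ?_⟩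
  have := hs.2.2 _ (hneg v hv) _ (hneg w hw) (by simp [← Multiset.map_add, ← h, Multiset.map_map])
  simpa using this

theorem IsAtomIn.merge_cons_cons {g h : G} {d : Multiset G} (hA : IsAtomIn (ZS G) (g ::ₘ h ::ₘ d)) :
    IsAtomIn (ZS G) ((g + h) ::ₘ d) := by
  have hsum : ∀ t : Multiset G, ((g + h) ::ₘ t).sum = (g ::ₘ h ::ₘ t).sum := fun t => by
    simp [add_assoc]
  -- a splitting of `(g + h) d` lifts to one of `g h d` along the part containing `g + h`
  have hlift : ∀ v ∈ ZS G, ∀ w ∈ ZS G, (g + h) ::ₘ d = v + w → g + h ∈ v → w = 0 := by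
    intro v hv w hw hvw hmem
    obtain ⟨v', rfl⟩ := Multiset.exists_cons_of_mem hmem
    have hd : d = v' + w := (Multiset.cons_inj_right _).mp (by rw [hvw, Multiset.cons_add])
    refine (hA.2.2 (g ::ₘ h ::ₘ v') ((hsum v').symm.trans hv) w hw ?_).resolve_left (by simp)
    rw [hd, Multiset.cons_add, Multiset.cons_add]
  refine ⟨(hsum d).trans hA.1, Multiset.cons_ne_zero, fun v hv w hw hvw => ?_⟩
  have hmem : g + h ∈ v + w := hvw ▸ Multiset.mem_cons_self _ _
  rcases Multiset.mem_add.mp hmem with hm | hm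
  · exact Or.inr (hlift v hv w hw hvw hm)
  · exact Or.inl (hlift w hw v hv (hvw.trans (add_comm v w)) hm)

end ZeroSumAtoms

section Davenport

variable {G : Type*} [AddCommGroup G] [Fintype G]

/-- Pigeonhole on the prefix sums of `s`: two of them agree, and the segment in between is a
nonempty proper zero-sum subsequence. -/
theorem IsAtomIn.card_le_card {s : Multiset G} (hs : IsAtomIn (ZS G) s) :
    Multiset.card s ≤ Fintype.card G := by
  by_contra! hlt
  set l := s.toList
  obtain ⟨i, j, hij, heq⟩ := Fintype.exists_ne_map_eq_of_card_lt
    (fun i : Fin (Multiset.card s) => (l.take i).sum) (by simpa using hlt)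
  wlog hlt' : i < j generalizing i j
  · exact this j i hij.symm heq.symm (lt_of_le_of_ne (not_lt.mp hlt') hij.symm)
  set t := (l.take j).drop i
  have ht0 : t.sum = 0 := by
    have := List.sum_take_add_sum_drop (l.take j) i
    rwa [List.take_take, min_eq_left (show (i : ℕ) ≤ j from hlt'.le), heq, add_eq_left] at this
  have hts : (t : Multiset G) ≤ s := by
    rw [← Multiset.coe_toList s]
    exact Multiset.coe_le.mpr ((List.drop_sublist _ _).trans (List.take_sublist _ _)).subperm
  have hlen : Multiset.card (t : Multiset G) = j - i := by
    simp only [Multiset.coe_card, t, List.length_drop, List.length_take, l, Multiset.length_toList]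
    omega
  rcases hs.eq_zero_or_eq_of_le hts (by simpa using ht0) with h | h <;>
    · have := congrArg Multiset.card h
      simp only [hlen, Multiset.card_zero] at this
      omega

theorem bddAbove_card_isAtomIn :
    BddAbove {n : ℕ | ∃ s : Multiset G, IsAtomIn (ZS G) s ∧ Multiset.card s = n} :=
  ⟨Fintype.card G, by rintro _ ⟨s, hs, rfl⟩; exact hs.card_le_card⟩

theorem IsAtomIn.card_le_davenport {s : Multiset G} (hs : IsAtomIn (ZS G) s) :
    Multiset.card s ≤ davenport G :=
  le_csSup bddAbove_card_isAtomIn ⟨s, hs, rfl⟩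

theorem exists_isAtomIn_card_eq_davenport :
    ∃ U : Multiset G, IsAtomIn (ZS G) U ∧ Multiset.card U = davenport G :=
  Nat.sSup_mem (s := {n | ∃ s : Multiset G, IsAtomIn (ZS G) s ∧ Multiset.card s = n})
    ⟨1, {0}, isAtomIn_singleton_zero, Multiset.card_singleton 0⟩ bddAbove_card_isAtomIn

theorem two_le_davenport [Nontrivial G] : 2 ≤ davenport G := by
  obtain ⟨g, hg⟩ := exists_ne (0 : G)
  simpa using (isAtomIn_pair hg).card_le_davenport

end Davenport

section Weight

variable {G : Type*} [AddCommGroup G]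

/-- Length plus number of zeros: the atom `0` has weight `2`, every other atom its length. -/
noncomputable def weightedCard : Multiset G →+ ℕ :=
  Multiset.cardHom + Multiset.countAddMonoidHom 0

theorem weightedCard_apply (s : Multiset G) :
    weightedCard s = Multiset.card s + s.count 0 := rfl

theorem card_le_weightedCard (s : Multiset G) : Multiset.card s ≤ weightedCard s :=
  Nat.le_add_right _ _

theorem IsAtomIn.two_le_weightedCard {s : Multiset G} (hs : IsAtomIn (ZS G) s) :
    2 ≤ weightedCard s := by
  by_cases h0 : (0 : G) ∈ s
  · simp [hs.eq_singleton_zero_of_zero_mem h0, weightedCard_apply]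
  have hne : Multiset.card s ≠ 0 := by simpa using hs.2.1
  have hne' : Multiset.card s ≠ 1 := by
    intro h1
    obtain ⟨x, rfl⟩ := Multiset.card_eq_one.mp h1
    exact h0 (by simpa [ZS, eq_comm] using hs.1)
  have := card_le_weightedCard s
  omega

theorem IsAtomIn.weightedCard_le_davenport [Fintype G] (hD : 2 ≤ davenport G) {s : Multiset G}
    (hs : IsAtomIn (ZS G) s) : weightedCard s ≤ davenport G := by
  by_cases h0 : (0 : G) ∈ s
  · simpa [hs.eq_singleton_zero_of_zero_mem h0, weightedCard_apply] using hD
  · rw [weightedCard_apply, Multiset.count_eq_zero_of_notMem h0, add_zero]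
    exact hs.card_le_davenport

theorem two_mul_card_le_weightedCard {a : Multiset G} {F : Multiset (Multiset G)}
    (hF : F ∈ factorizations (ZS G) a) : 2 * Multiset.card F ≤ weightedCard a := by
  rw [← hF.2, map_multiset_sum, mul_comm, ← smul_eq_mul, ← Multiset.card_map weightedCard]
  exact Multiset.card_nsmul_le_sum
    (Multiset.forall_mem_map_iff.mpr fun x hx => (hF.1 x hx).two_le_weightedCard)

theorem weightedCard_le_card_mul_davenport [Fintype G] (hD : 2 ≤ davenport G)
    {a : Multiset G} {F : Multiset (Multiset G)} (hF : F ∈ factorizations (ZS G) a) :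
    weightedCard a ≤ Multiset.card F * davenport G := by
  rw [← hF.2, map_multiset_sum, ← smul_eq_mul, ← Multiset.card_map weightedCard]
  exact Multiset.sum_le_card_nsmul _ _
    (Multiset.forall_mem_map_iff.mpr fun x hx => (hF.1 x hx).weightedCard_le_davenport hD)

theorem two_mul_le_mul_davenport_of_mem_UIn [Fintype G] (hD : 2 ≤ davenport G) {k ℓ : ℕ}
    (h : ℓ ∈ UIn (ZS G) k) : 2 * ℓ ≤ k * davenport G := by
  obtain ⟨a, hk, hℓ⟩ := mem_UIn_iff.mp h
  obtain ⟨F, hF, rfl⟩ := mem_lengthsIn_iff.mp hk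
  obtain ⟨F', hF', rfl⟩ := mem_lengthsIn_iff.mp hℓ
  exact (two_mul_card_le_weightedCard hF').trans (weightedCard_le_card_mul_davenport hD hF)

end Weight

section Extremal

variable {G : Type*} [AddCommGroup G]

theorem two_mem_lengthsIn_add_map_neg {U : Multiset G} (hU : IsAtomIn (ZS G) U) :
    2 ∈ lengthsIn (ZS G) (U + U.map Neg.neg) :=
  mem_lengthsIn_iff.mpr ⟨{U, U.map Neg.neg}, ⟨by simp [hU, hU.map_neg], by simp⟩, rfl⟩

theorem card_mem_lengthsIn_add_map_neg {U : Multiset G} (hU : (0 : G) ∉ U) :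
    Multiset.card U ∈ lengthsIn (ZS G) (U + U.map Neg.neg) := by
  refine mem_lengthsIn_iff.mpr ⟨U.map fun g => {g, -g}, ⟨?_, ?_⟩, Multiset.card_map _ _⟩
  · exact Multiset.forall_mem_map_iff.mpr fun g hg => isAtomIn_pair (ne_of_mem_of_not_mem hg hU)
  · calc (U.map fun g => ({g, -g} : Multiset G)).sum
        = (U.map fun g => ({g} + {-g} : Multiset G)).sum := by simp [Multiset.singleton_add]
      _ = U + U.map Neg.neg := by
        rw [Multiset.sum_map_add, Multiset.sum_map_singleton,
          ← Multiset.sum_map_singleton (U.map Neg.neg), Multiset.map_map]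
        rfl

variable [Fintype G]

theorem exists_lengthsIn_two_davenport (hD : 2 ≤ davenport G) :
    ∃ a ∈ ZS G, 2 ∈ lengthsIn (ZS G) a ∧ davenport G ∈ lengthsIn (ZS G) a ∧
      ∀ n ∈ lengthsIn (ZS G) a, 2 ≤ n := by
  obtain ⟨U, hU, hUD⟩ := exists_isAtomIn_card_eq_davenport (G := G)
  have hU0 : (0 : G) ∉ U := fun h0 => by
    rw [hU.eq_singleton_zero_of_zero_mem h0, Multiset.card_singleton] at hUD
    omega
  refine ⟨U + U.map Neg.neg, ?_, two_mem_lengthsIn_add_map_neg hU,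
    hUD ▸ card_mem_lengthsIn_add_map_neg hU0, fun n hn => ?_⟩
  · show (U + U.map Neg.neg).sum = 0
    rw [Multiset.sum_add, Multiset.sum_map_neg', add_neg_cancel]
  · obtain ⟨F, hF, rfl⟩ := mem_lengthsIn_iff.mp hn
    have h := (card_le_weightedCard _).trans (weightedCard_le_card_mul_davenport hD hF)
    rw [Multiset.card_add, Multiset.card_map, hUD, ← two_mul] at h
    exact Nat.le_of_mul_le_mul_right h (by omega)

theorem mul_davenport_mem_UIn (hD : 2 ≤ davenport G) (k : ℕ) :
    k * davenport G ∈ UIn (ZS G) (2 * k) := by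
  obtain ⟨a, -, h2, hDa, -⟩ := exists_lengthsIn_two_davenport hD
  induction k with
  | zero => simpa using self_mem_UIn isAtomIn_singleton_zero 0
  | succ k ih =>
    rw [add_one_mul, mul_add_one]
    exact add_mem_UIn_add ih (mem_UIn_iff.mpr ⟨a, h2, hDa⟩)

end Extremal

section Interval

variable {G : Type*} [AddCommGroup G]

theorem Multiset.pair_le_of_mem_inter_of_mem_sub {α : Type*} [DecidableEq α]
    {A B : Multiset α} {g h : α} (hg : g ∈ A ∩ B) (hh : h ∈ A - B) : {g, h} ≤ A :=
  calc ({g, h} : Multiset α) = {g} + {h} := by simp [Multiset.singleton_add]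
    _ ≤ A ∩ B + (A - B) := add_le_add (Multiset.singleton_le.mpr hg) (Multiset.singleton_le.mpr hh)
    _ = A := by rw [add_comm, Multiset.sub_add_inter]

theorem exists_crossing {a : Multiset G} {F₁ F₂ : Multiset (Multiset G)}
    (h₁ : F₁ ∈ factorizations (ZS G) a) (h₂ : F₂ ∈ factorizations (ZS G) a)
    (hlt : Multiset.card F₁ < Multiset.card F₂) :
    ∃ A ∈ F₁, ∃ B₁ B₂ : Multiset G, ∃ g h : G,
      {B₁, B₂} ≤ F₂ ∧ g ∈ B₁ ∧ h ∈ B₂ ∧ {g, h} ≤ A := by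
  induction F₁ using Multiset.induction_on generalizing a F₂ with
  | empty =>
    obtain ⟨B, hB⟩ := Multiset.card_pos_iff_exists_mem.mp hlt
    have hsum : F₂.sum = 0 := h₂.2.trans (by simpa using h₁.2.symm)
    exact absurd (Multiset.sum_eq_zero_iff.mp hsum B hB) (h₂.1 B hB).2.1
  | cons A F₁ ih =>
    have hA := h₁.1 A (Multiset.mem_cons_self A F₁)
    have hsum : A + F₁.sum = F₂.sum := by rw [← Multiset.sum_cons, h₁.2, h₂.2]
    obtain ⟨g, hg⟩ := Multiset.exists_mem_of_ne_zero hA.2.1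
    obtain ⟨B, hB, hgB⟩ := Multiset.mem_join.mp
      (Multiset.mem_of_le (hsum ▸ Multiset.le_add_right A F₁.sum) hg)
    have hF₂ := Multiset.cons_erase hB
    have hsum' : A + F₁.sum = B + (F₂.erase B).sum := by rw [hsum, ← Multiset.sum_cons, hF₂]
    by_cases hAB : A ≤ B
    · obtain rfl : A = B :=
        ((h₂.1 B hB).eq_zero_or_eq_of_le hAB hA.1).resolve_left hA.2.1
      have hlt' : Multiset.card F₁ < Multiset.card (F₂.erase A) := by
        rw [← hF₂, Multiset.card_cons, Multiset.card_cons] at hlt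
        omega
      obtain ⟨A', hA', B₁, B₂, g, h, hB₁₂, hg, hh, hgh⟩ :=
        ih ⟨fun x hx => h₁.1 x (Multiset.mem_cons_of_mem hx), rfl⟩
          ⟨fun x hx => h₂.1 x (Multiset.mem_of_mem_erase hx), (add_left_cancel hsum').symm⟩ hlt'
      exact ⟨A', Multiset.mem_cons_of_mem hA', B₁, B₂, g, h,
        hB₁₂.trans (Multiset.erase_le A F₂), hg, hh, hgh⟩
    · obtain ⟨h, hh⟩ := Multiset.exists_mem_of_ne_zero (mt tsub_eq_zero_iff_le.mp hAB)
      have hle : A - B ≤ (F₂.erase B).sum :=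
        tsub_le_iff_left.mpr (hsum' ▸ Multiset.le_add_right _ _)
      obtain ⟨B', hB', hhB'⟩ := Multiset.mem_join.mp (Multiset.mem_of_le hle hh)
      refine ⟨A, Multiset.mem_cons_self A F₁, B, B', g, h, ?_, hgB, hhB', ?_⟩
      · rw [← hF₂]
        exact Multiset.cons_le_cons B (Multiset.singleton_le.mpr hB')
      · exact Multiset.pair_le_of_mem_inter_of_mem_sub (Multiset.mem_inter.mpr ⟨hg, hgB⟩) hh

theorem exists_factorizations_of_card_lt {a : Multiset G} {F₁ F₂ : Multiset (Multiset G)}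
    (h₁ : F₁ ∈ factorizations (ZS G) a) (h₂ : F₂ ∈ factorizations (ZS G) a)
    (hlt : Multiset.card F₁ < Multiset.card F₂) :
    ∃ a' : Multiset G, ∃ F₁' ∈ factorizations (ZS G) a', ∃ F₂' ∈ factorizations (ZS G) a',
      Multiset.card a' < Multiset.card a ∧ Multiset.card F₁' = Multiset.card F₁ ∧
      Multiset.card F₂ ≤ Multiset.card F₂' + 1 := by
  obtain ⟨A, hA, B₁, B₂, g, h, hB, hg, hh, hgh⟩ := exists_crossing h₁ h₂ hlt
  obtain ⟨R₁, rfl⟩ := Multiset.exists_cons_of_mem hA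
  obtain ⟨R₂, rfl⟩ := Multiset.le_iff_exists_add.mp hB
  obtain ⟨d, rfl⟩ := Multiset.le_iff_exists_add.mp hgh
  obtain ⟨b₁, rfl⟩ := Multiset.exists_cons_of_mem hg
  obtain ⟨b₂, rfl⟩ := Multiset.exists_cons_of_mem hh
  have hA' : IsAtomIn (ZS G) (g ::ₘ h ::ₘ d) := by
    simpa [Multiset.insert_eq_cons] using h₁.1 _ (Multiset.mem_cons_self _ _)
  have hB₁ : IsAtomIn (ZS G) (g ::ₘ b₁) := h₂.1 _ (by simp)
  have hB₂ : IsAtomIn (ZS G) (h ::ₘ b₂) := h₂.1 _ (by simp)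
  have hrest : d + R₁.sum = b₁ + b₂ + R₂.sum := by
    have := h₁.2.trans h₂.2.symm
    simp only [Multiset.sum_cons, Multiset.insert_eq_cons, Multiset.cons_add, Multiset.add_cons,
      Multiset.singleton_add] at this
    rwa [Multiset.cons_swap h g, Multiset.cons_inj_right, Multiset.cons_inj_right,
      ← add_assoc] at this
  have hC : (g + h) ::ₘ (b₁ + b₂) ∈ ZS G := by
    have hg0 : g + b₁.sum = 0 := (Multiset.sum_cons g b₁).symm.trans hB₁.1
    have hh0 : h + b₂.sum = 0 := (Multiset.sum_cons h b₂).symm.trans hB₂.1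
    show ((g + h) ::ₘ (b₁ + b₂)).sum = 0
    rw [Multiset.sum_cons, Multiset.sum_add, add_add_add_comm, hg0, hh0, add_zero]
  obtain ⟨C, hC⟩ := factorizations_nonempty hC
  have hC0 : C ≠ 0 := by
    rintro rfl
    exact Multiset.cons_ne_zero (hC.2.symm.trans Multiset.sum_zero)
  refine ⟨(g + h) ::ₘ (d + R₁.sum), ((g + h) ::ₘ d) ::ₘ R₁, ⟨?_, ?_⟩, C + R₂, ⟨?_, ?_⟩, ?_, ?_, ?_⟩
  · exact Multiset.forall_mem_cons.mpr
      ⟨hA'.merge_cons_cons, fun x hx => h₁.1 x (Multiset.mem_cons_of_mem hx)⟩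
  · rw [Multiset.sum_cons, Multiset.cons_add]
  · exact fun x hx => (Multiset.mem_add.mp hx).elim (hC.1 x)
      fun hx => h₂.1 x (Multiset.mem_add.mpr (Or.inr hx))
  · rw [Multiset.sum_add, hC.2, Multiset.cons_add, hrest]
  · rw [← h₁.2]
    simp
  · simp
  · have := Multiset.card_pos.mpr hC0
    simp only [Multiset.card_add, Multiset.insert_eq_cons, Multiset.card_cons,
      Multiset.card_singleton]
    omega


theorem mem_UIn_of_mem_factorizations {a : Multiset G} {F₁ F₂ : Multiset (Multiset G)}
    (h₁ : F₁ ∈ factorizations (ZS G) a) (h₂ : F₂ ∈ factorizations (ZS G) a) {i : ℕ}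
    (hi₁ : Multiset.card F₁ ≤ i) (hi₂ : i ≤ Multiset.card F₂) :
    i ∈ UIn (ZS G) (Multiset.card F₁) := by
  induction hn : Multiset.card a using Nat.strong_induction_on generalizing a F₁ F₂ with
  | _ n ih =>
  rcases hi₂.eq_or_lt with rfl | hlt
  · exact mem_UIn_iff.mpr ⟨a, mem_lengthsIn_iff.mpr ⟨F₁, h₁, rfl⟩,
      mem_lengthsIn_iff.mpr ⟨F₂, h₂, rfl⟩⟩
  obtain ⟨a', F₁', h₁', F₂', h₂', ha', hF₁', hF₂'⟩ :=
    exists_factorizations_of_card_lt h₁ h₂ (hi₁.trans_lt hlt)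
  rw [← hF₁']
  exact ih _ (hn ▸ ha') h₁' h₂' (hF₁' ▸ hi₁) (by omega) rfl

theorem mem_UIn_of_le_of_le {k y z : ℕ} (hz : z ∈ UIn (ZS G) k) (hky : k ≤ y) (hyz : y ≤ z) :
    y ∈ UIn (ZS G) k := by
  obtain ⟨a, hka, hza⟩ := mem_UIn_iff.mp hz
  obtain ⟨F₁, h₁, rfl⟩ := mem_lengthsIn_iff.mp hka
  obtain ⟨F₂, h₂, rfl⟩ := mem_lengthsIn_iff.mp hza
  exact mem_UIn_of_mem_factorizations h₁ h₂ hky hyz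

theorem ordConnected_UIn (k : ℕ) : (UIn (ZS G) k).OrdConnected := by
  refine ⟨fun x hx z hz y ⟨hxy, hyz⟩ => ?_⟩
  rcases le_total k y with hky | hyk
  · exact mem_UIn_of_le_of_le hz hky hyz
  · have hpad : y ∈ UIn (ZS G) (k + (y - x)) := by
      simpa [Nat.add_sub_cancel' hxy] using
        add_mem_UIn_add hx (self_mem_UIn isAtomIn_singleton_zero (y - x))
    exact UIn_comm.mp (mem_UIn_of_le_of_le (UIn_comm.mp hpad) hyk (Nat.le_add_right k _))

end Interval

section Elasticity

theorem setElasticity_le {L : Set ℕ} {r : ℝ≥0∞} (hr : 1 ≤ r)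
    (h : ∀ k ∈ L, ∀ ℓ ∈ L, (ℓ : ℝ≥0∞) ≤ k * r) : setElasticity L ≤ r := by
  rw [setElasticity]
  split_ifs with hL
  · exact hr
  rcases L.eq_empty_or_nonempty with rfl | hne
  · simp
  have hmin := Nat.sInf_mem hne
  have h0 : sInf L ≠ 0 := by
    intro h0
    refine hL (Set.eq_singleton_iff_unique_mem.mpr ⟨h0 ▸ hmin, fun n hn => ?_⟩)
    simpa [h0] using h _ hmin n hn
  rw [ENNReal.div_le_iff (by exact_mod_cast h0) (ENNReal.natCast_ne_top _)]
  exact iSup₂_le fun ℓ hℓ => (h _ hmin ℓ hℓ).trans_eq (mul_comm _ _)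

theorem div_le_setElasticity {L : Set ℕ} {k ℓ : ℕ} (hk : k ∈ L) (hℓ : ℓ ∈ L)
    (hmin : ∀ n ∈ L, k ≤ n) (hk0 : k ≠ 0) : (ℓ : ℝ≥0∞) / k ≤ setElasticity L := by
  have hL : L ≠ {0} := fun h => hk0 (by simpa [h] using hk)
  have hInf : sInf L = k := le_antisymm (Nat.sInf_le hk) (hmin _ (Nat.sInf_mem ⟨k, hk⟩))
  rw [setElasticity, if_neg hL, hInf]
  exact ENNReal.div_le_div_right (le_iSup₂ (f := fun n (_ : n ∈ L) => (n : ℝ≥0∞)) ℓ hℓ) _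

variable {G : Type*} [AddCommGroup G] [Fintype G]

theorem elasticityIn_ZS (hD : 2 ≤ davenport G) :
    elasticityIn (ZS G) = (davenport G : ℝ≥0∞) / 2 := by
  apply le_antisymm
  · refine iSup₂_le fun a _ => setElasticity_le ?_ fun k hk ℓ hℓ => ?_
    · rw [ENNReal.le_div_iff_mul_le (by simp) (by simp), one_mul]
      exact_mod_cast hD
    · have := two_mul_le_mul_davenport_of_mem_UIn hD (mem_UIn_iff.mpr ⟨a, hk, hℓ⟩)
      rw [← mul_div_assoc, ENNReal.le_div_iff_mul_le (by simp) (by simp)]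
      exact_mod_cast (by linarith : ℓ * 2 ≤ k * davenport G)
  · obtain ⟨a, ha, h2, hDa, h2le⟩ := exists_lengthsIn_two_davenport hD
    exact (div_le_setElasticity h2 hDa h2le two_ne_zero).trans
      (le_iSup₂ (f := fun a (_ : a ∈ ZS G) => setElasticity (lengthsIn (ZS G) a)) a ha)

end Elasticity

section Rho

variable {G : Type*} [AddCommGroup G] [Fintype G]

theorem rhoKIn_two_mul (hD : 2 ≤ davenport G) (k : ℕ) :
    rhoKIn (ZS G) (2 * k) = ((k * davenport G : ℕ) : ℝ≥0∞) := by
  refine le_antisymm (rhoKIn_le fun ℓ hℓ => ?_) (le_rhoKIn (mul_davenport_mem_UIn hD k))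
  have := two_mul_le_mul_davenport_of_mem_UIn hD hℓ
  rw [mul_assoc] at this
  omega

theorem one_add_mul_davenport_le_rhoKIn (hD : 2 ≤ davenport G) (k : ℕ) :
    ((1 + k * davenport G : ℕ) : ℝ≥0∞) ≤ rhoKIn (ZS G) (2 * k + 1) := by
  rw [add_comm (2 * k)]
  exact le_rhoKIn (add_mem_UIn_add (self_mem_UIn isAtomIn_singleton_zero 1)
    (mul_davenport_mem_UIn hD k))

theorem rhoKIn_two_mul_add_one_le (hD : 2 ≤ davenport G) (k : ℕ) :
    rhoKIn (ZS G) (2 * k + 1) ≤ ((k * davenport G + davenport G / 2 : ℕ) : ℝ≥0∞) := by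
  refine rhoKIn_le fun ℓ hℓ => ?_
  have := two_mul_le_mul_davenport_of_mem_UIn hD hℓ
  rw [add_mul, mul_assoc, one_mul] at this
  omega

end Rho

theorem stmt17 {G : Type*} [AddCommGroup G] [Fintype G] (hG : 3 ≤ Fintype.card G) :
    (∀ k : ℕ, 1 ≤ k → ∀ x y z : ℕ, x ∈ UIn (ZS G) k → z ∈ UIn (ZS G) k →
      x ≤ y → y ≤ z → y ∈ UIn (ZS G) k) ∧
    elasticityIn (ZS G) = (davenport G : ℝ≥0∞) / 2 ∧
    (∀ k : ℕ, 1 ≤ k → rhoKIn (ZS G) (2 * k) = ((k * davenport G : ℕ) : ℝ≥0∞)) ∧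
    (∀ k : ℕ, 1 ≤ k →
      ((1 + k * davenport G : ℕ) : ℝ≥0∞) ≤ rhoKIn (ZS G) (2 * k + 1) ∧
      rhoKIn (ZS G) (2 * k + 1) ≤ ((k * davenport G + davenport G / 2 : ℕ) : ℝ≥0∞)) := by
  have : Nontrivial G := Fintype.one_lt_card_iff_nontrivial.mp (by omega)
  have hD : 2 ≤ davenport G := two_le_davenport
  exact ⟨fun k _ x y z hx hz hxy hyz => (ordConnected_UIn k).out hx hz ⟨hxy, hyz⟩,
    elasticityIn_ZS hD,
    fun k _ => rhoKIn_two_mul hD k,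
    fun k _ => ⟨one_add_mul_davenport_le_rhoKIn hD k, rhoKIn_two_mul_add_one_le hD k⟩⟩
end
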